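/- Let L be an n-Lie algebra. On the (n−1)-fold tensor power L^{⊗(n−1)}, define [x₁⊗⋯⊗x_{n−1}, y₁⊗⋯⊗y_{n−1}] = Σᵢ y₁⊗⋯⊗[x₁,…,x_{n−1},yᵢ]⊗⋯⊗y_{n−1}. Then this bracket makes L^{⊗(n−1)} a Leibniz algebra. -/
import Mathlib

open scoped TensorProduct

set_option linter.unusedSectionVars false

section TPLAux
variable {F L : Type*} [Field F] [AddCommGroup L] [Module F L] {m : ℕ}

noncomputable def derAux (f : L →ₗ[F] L) :
    MultilinearMap F (fun _ : Fin (m + 1) => L) (⨂[F] (_ : Fin (m + 1)), L) :=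
  ∑ i, (PiTensorProduct.tprod F).compLinearMap (Function.update (fun _ => LinearMap.id) i f)

lemma derAux_apply (f : L →ₗ[F] L) (y : Fin (m + 1) → L) :
    derAux (F := F) f y = ∑ i, PiTensorProduct.tprod F (Function.update y i (f (y i))) := by
  simp only [derAux, MultilinearMap.sum_apply, MultilinearMap.compLinearMap_apply]
  refine Finset.sum_congr rfl fun i _ => ?_
  congr 1
  funext j
  rcases eq_or_ne j i with rfl | h
  · simp
  · simp [h, Function.update_of_ne h]

noncomputable def Der (f : L →ₗ[F] L) :
    (⨂[F] (_ : Fin (m + 1)), L) →ₗ[F] (⨂[F] (_ : Fin (m + 1)), L) :=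
  PiTensorProduct.lift (derAux f)

lemma Der_tprod (f : L →ₗ[F] L) (y : Fin (m + 1) → L) :
    Der (F := F) f (PiTensorProduct.tprod F y) =
      ∑ i, PiTensorProduct.tprod F (Function.update y i (f (y i))) := by
  simp [Der, derAux_apply]

lemma Der_add (f g : L →ₗ[F] L) :
    Der (F := F) (m := m) (f + g) = Der f + Der g := by
  apply PiTensorProduct.ext
  ext y
  simp [Der_tprod, Finset.sum_add_distrib, (PiTensorProduct.tprod F).map_update_add]

lemma Der_smul (c : F) (f : L →ₗ[F] L) :
    Der (F := F) (m := m) (c • f) = c • Der f := by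
  apply PiTensorProduct.ext
  ext y
  simp [Der_tprod, Finset.smul_sum, (PiTensorProduct.tprod F).map_update_smul]

noncomputable def DerL :
    (L →ₗ[F] L) →ₗ[F]
      ((⨂[F] (_ : Fin (m + 1)), L) →ₗ[F] (⨂[F] (_ : Fin (m + 1)), L)) where
  toFun := Der
  map_add' := Der_add
  map_smul' := Der_smul

lemma snoc_update' [inst : DecidableEq (Fin (m + 1))] (x : Fin (m + 1) → L) (i : Fin (m + 1))
    (a z : L) :
    (Fin.snoc (Function.update x i a) z : Fin (m + 2) → L)
      = Function.update (Fin.snoc x z) i.castSucc a := by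
  rw [Subsingleton.elim inst (instDecidableEqFin (m + 1))]
  exact Fin.snoc_update (α := fun _ : Fin (m + 2) => L) z x i a

lemma update_snoc_last' (x : Fin (m + 1) → L) (a z : L) :
    Function.update (Fin.snoc x a : Fin (m + 2) → L) (Fin.last (m + 1)) z = Fin.snoc x z :=
  Fin.update_snoc_last (α := fun _ : Fin (m + 2) => L) a x z

variable (br : AlternatingMap F L L (Fin (m + 2)))

/-- `ad x : z ↦ br (snoc x z)` as a linear map, multilinear in `x`. -/
noncomputable def adM : MultilinearMap F (fun _ : Fin (m + 1) => L) (L →ₗ[F] L) where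
  toFun x :=
    haveI h : ∀ z : L, (Fin.snoc x z : Fin (m + 2) → L)
        = Function.update (Fin.snoc x (0 : L)) (Fin.last _) z :=
      fun z => (update_snoc_last' x 0 z).symm
    { toFun := fun z => br (Fin.snoc x z)
      map_add' := fun a b => by
        show br (Fin.snoc x (a + b)) = br (Fin.snoc x a) + br (Fin.snoc x b)
        rw [h (a + b), h a, h b]
        exact br.toMultilinearMap.map_update_add _ _ _ _
      map_smul' := fun c a => by
        show br (Fin.snoc x (c • a)) = c • br (Fin.snoc x a)
        rw [h (c • a), h a]
        exact br.toMultilinearMap.map_update_smul _ _ _ _ }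
  map_update_add' := fun x i a b => by
    ext z
    show br (Fin.snoc (Function.update x i (a + b)) z)
      = br (Fin.snoc (Function.update x i a) z) + br (Fin.snoc (Function.update x i b) z)
    rw [snoc_update', snoc_update', snoc_update']
    exact br.toMultilinearMap.map_update_add _ _ _ _
  map_update_smul' := fun x i c a => by
    ext z
    show br (Fin.snoc (Function.update x i (c • a)) z) = c • br (Fin.snoc (Function.update x i a) z)
    rw [snoc_update', snoc_update']
    exact br.toMultilinearMap.map_update_smul _ _ _ _

lemma adM_apply (x : Fin (m + 1) → L) (z : L) : adM br x z = br (Fin.snoc x z) := rfl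

noncomputable def A : (⨂[F] (_ : Fin (m + 1)), L) →ₗ[F] (L →ₗ[F] L) :=
  PiTensorProduct.lift (adM br)

noncomputable def bb :
    (⨂[F] (_ : Fin (m + 1)), L) →ₗ[F]
      (⨂[F] (_ : Fin (m + 1)), L) →ₗ[F] (⨂[F] (_ : Fin (m + 1)), L) :=
  PiTensorProduct.lift (DerL.compMultilinearMap (adM br))

lemma bb_eq (u : ⨂[F] (_ : Fin (m + 1)), L) : bb br u = Der (A br u) := by
  have : bb br = DerL ∘ₗ A br := by
    apply PiTensorProduct.ext
    ext x
    simp [bb, A, DerL]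
  rw [this]; rfl

lemma bb_tprod (x y : Fin (m + 1) → L) :
    bb br (PiTensorProduct.tprod F x) (PiTensorProduct.tprod F y) =
      ∑ i, PiTensorProduct.tprod F (Function.update y i (br (Fin.snoc x (y i)))) := by
  rw [bb_eq]
  simp [A, Der_tprod, adM_apply]

lemma Der_comm (f g : L →ₗ[F] L) (w : ⨂[F] (_ : Fin (m + 1)), L) :
    Der f (Der g w) = Der (f ∘ₗ g - g ∘ₗ f) w + Der g (Der f w) := by
  induction w using PiTensorProduct.induction_on with
  | smul_tprod c z =>
    simp only [map_smul]
    rw [← smul_add]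
    congr 1
    have key : ∀ f g : L →ₗ[F] L,
        Der f (Der g (PiTensorProduct.tprod F z))
          = ∑ j, PiTensorProduct.tprod F (Function.update z j (f (g (z j))))
            + ∑ j, ∑ i ∈ Finset.univ.erase j,
                PiTensorProduct.tprod F
                  (Function.update (Function.update z j (g (z j))) i (f (z i))) := by
      intro f g
      rw [Der_tprod, map_sum]
      simp only [Der_tprod]
      rw [← Finset.sum_add_distrib]
      refine Finset.sum_congr rfl fun j _ => ?_
      rw [← Finset.add_sum_erase _ _ (Finset.mem_univ j)]
      congr 1
      · rw [Function.update_self, Function.update_idem]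
      · refine Finset.sum_congr rfl fun i hi => ?_
        rw [Function.update_of_ne (Finset.ne_of_mem_erase hi)]
    have offd :
        (∑ j, ∑ i ∈ Finset.univ.erase j,
            PiTensorProduct.tprod F
              (Function.update (Function.update z j (g (z j))) i (f (z i))))
          = ∑ j, ∑ i ∈ Finset.univ.erase j,
              PiTensorProduct.tprod F
                (Function.update (Function.update z j (f (z j))) i (g (z i))) := by
      have e : ∀ j : Fin (m + 1), Finset.univ.erase j
          = Finset.univ.filter (fun i => i ≠ j) := by
        intro j; ext i; simp [Finset.mem_erase]
      simp only [e, Finset.sum_filter]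
      rw [Finset.sum_comm]
      refine Finset.sum_congr rfl fun i _ => Finset.sum_congr rfl fun j _ => ?_
      rcases eq_or_ne j i with rfl | h
      · simp
      · rw [if_pos h, if_pos (Ne.symm h), Function.update_comm h]
    rw [key f g, key g f, Der_tprod, offd]
    have : ∀ j : Fin (m + 1),
        PiTensorProduct.tprod F (Function.update z j ((f ∘ₗ g - g ∘ₗ f) (z j)))
          = PiTensorProduct.tprod F (Function.update z j (f (g (z j))))
            - PiTensorProduct.tprod F (Function.update z j (g (f (z j)))) := by
      intro j
      rw [LinearMap.sub_apply]
      exact (PiTensorProduct.tprod F).map_update_sub _ _ _ _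
    simp only [this, Finset.sum_sub_distrib]
    abel
  | add a b ha hb => simp only [map_add, ha, hb]; abel

lemma A_tprod (x : Fin (m + 1) → L) : A br (PiTensorProduct.tprod F x) = adM br x := by
  simp [A]

lemma ad_comm
    (hFI : ∀ (x : Fin (m + 1) → L) (y : Fin (m + 2) → L),
      br (Fin.snoc x (br y)) =
        ∑ i, br (Function.update y i (br (Fin.snoc x (y i)))))
    (x y : Fin (m + 1) → L) :
    (∑ i, adM br (Function.update y i (br (Fin.snoc x (y i)))))
      = adM br x ∘ₗ adM br y - adM br y ∘ₗ adM br x := by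
  ext z
  have h := hFI x (Fin.snoc y z)
  rw [Fin.sum_univ_castSucc] at h
  simp only [Fin.snoc_castSucc, Fin.snoc_last] at h
  have e1 : ∀ k : Fin (m + 1),
      Function.update (Fin.snoc y z : Fin (m + 2) → L) k.castSucc
          (br (Fin.snoc x (y k)))
        = Fin.snoc (Function.update y k (br (Fin.snoc x (y k)))) z :=
    fun k => (snoc_update' y k _ z).symm
  simp only [e1, update_snoc_last'] at h
  simp only [LinearMap.coe_sum, Finset.sum_apply, LinearMap.sub_apply,
    LinearMap.comp_apply, adM_apply]
  rw [h]
  abel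

lemma A_bb_tprod
    (hFI : ∀ (x : Fin (m + 1) → L) (y : Fin (m + 2) → L),
      br (Fin.snoc x (br y)) =
        ∑ i, br (Function.update y i (br (Fin.snoc x (y i)))))
    (x y : Fin (m + 1) → L) :
    A br (bb br (PiTensorProduct.tprod F x) (PiTensorProduct.tprod F y))
      = A br (PiTensorProduct.tprod F x) ∘ₗ A br (PiTensorProduct.tprod F y)
        - A br (PiTensorProduct.tprod F y) ∘ₗ A br (PiTensorProduct.tprod F x) := by
  rw [bb_tprod, map_sum, A_tprod, A_tprod]
  simp only [A_tprod]
  exact ad_comm br hFI x y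

lemma A_bb
    (hFI : ∀ (x : Fin (m + 1) → L) (y : Fin (m + 2) → L),
      br (Fin.snoc x (br y)) =
        ∑ i, br (Function.update y i (br (Fin.snoc x (y i)))))
    (u v : ⨂[F] (_ : Fin (m + 1)), L) :
    A br (bb br u v) = A br u ∘ₗ A br v - A br v ∘ₗ A br u := by
  induction u using PiTensorProduct.induction_on with
  | smul_tprod c x =>
    induction v using PiTensorProduct.induction_on with
    | smul_tprod d y =>
      simp only [map_smul, LinearMap.smul_apply, LinearMap.smul_comp,
        LinearMap.comp_smul, smul_sub]
      rw [A_bb_tprod br hFI x y]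
      simp only [smul_sub]
      rw [smul_comm c d]
    | add v₁ v₂ h₁ h₂ =>
      simp only [map_add, LinearMap.add_apply, h₁, h₂, LinearMap.comp_add,
        LinearMap.add_comp]
      abel
  | add u₁ u₂ h₁ h₂ =>
    simp only [map_add, LinearMap.add_apply, h₁, h₂, LinearMap.comp_add,
      LinearMap.add_comp]
    abel

end TPLAux

/-- On the `(n-1)`-fold tensor power of an `n`-Lie algebra (here `n = m + 2`),
the bracket `[x₁⊗⋯⊗x_{n-1}, y₁⊗⋯⊗y_{n-1}] = Σᵢ y₁⊗⋯⊗[x₁,…,x_{n-1},yᵢ]⊗⋯⊗y_{n-1}`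
makes it a Leibniz algebra. -/
theorem tensor_power_leibniz
    (F L : Type*) [Field F] [AddCommGroup L] [Module F L] (m : ℕ)
    (br : AlternatingMap F L L (Fin (m + 2)))
    (hFI : ∀ (x : Fin (m + 1) → L) (y : Fin (m + 2) → L),
      br (Fin.snoc x (br y)) =
        ∑ i, br (Function.update y i (br (Fin.snoc x (y i))))) :
    ∃ b : (⨂[F] (_ : Fin (m + 1)), L) →ₗ[F] (⨂[F] (_ : Fin (m + 1)), L) →ₗ[F]
        (⨂[F] (_ : Fin (m + 1)), L),
      (∀ x y : Fin (m + 1) → L,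
        b (PiTensorProduct.tprod F x) (PiTensorProduct.tprod F y) =
          ∑ i, PiTensorProduct.tprod F
            (Function.update y i (br (Fin.snoc x (y i))))) ∧
      (∀ u v w, b u (b v w) = b (b u v) w + b v (b u w)) := by
  refine ⟨bb br, bb_tprod br, fun u v w => ?_⟩
  rw [bb_eq br u, bb_eq br v, Der_comm (A br u) (A br v) w,
    ← A_bb br hFI u v, ← bb_eq, ← bb_eq, ← bb_eq]
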